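/- arXiv:2112.13008 — 5 statements merged into one kernel-verified Lean document; each statement's English description precedes it below -/
import Mathlib

section
/- Let f : ℂ → ℂ be the evaluation map of a complex polynomial of degree ≥ 2 which is backward uniformly asymptotically stable. Then lim_{r→0⁺} sup{ diam W : n ∈ ℕ, z ∈ J(f), W a connected component of (f^[n])⁻¹(B(z,r)) } = 0; that is, for every ε > 0 there is r' > 0 such that every connected component of every iterated preimage (f^[n])⁻¹(B(z,r')) with z ∈ J(f) has diameter at most ε. -/
/-! For `z ∈ J(f)` the map `f^[N]` sends `B(z, r')` into `B(f^[N] z, r₀)` once `r'` is small,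
uniformly in `z` because `J(f)` is compact; as `f^[N] z ∈ J(f)`, every component of
`(f^[n])⁻¹(B(z, r'))` then lies in a component of `(f^[N + n])⁻¹(B(f^[N] z, r₀))`, which for `N`
given by backward stability has diameter at most `ε`. That component is bounded because
polynomials are proper, which matters since `Metric.diam` of an unbounded set is `0`. -/

open Filter Metric Set Topology

noncomputable section

/-- `f` is the evaluation map of a complex polynomial of degree at least 2. -/
def IsPolyEvalDeg2 (f : ℂ → ℂ) : Prop :=
  ∃ p : Polynomial ℂ, 2 ≤ p.natDegree ∧ ∀ z, f z = p.eval z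

/-- The filled Julia set of `f`. -/
def filledJulia (f : ℂ → ℂ) : Set ℂ :=
  {z | Bornology.IsBounded (Set.range fun n => f^[n] z)}

/-- The Julia set of `f`. -/
def juliaSet (f : ℂ → ℂ) : Set ℂ := frontier (filledJulia f)

/-- The set of critical points of `f`. -/
def critSet (f : ℂ → ℂ) : Set ℂ := {z | deriv f z = 0}

/-- `z` is non-exceptional. -/
def NonExceptional (f : ℂ → ℂ) (z : ℂ) : Prop :=
  ∀ ε > 0, ∃ N : ℕ, ∀ n ≥ N, ∀ j, 1 ≤ j → j ≤ n →
    Metric.ball z (Real.exp (-(n : ℝ) * ε)) ∩ (f^[j] '' critSet f) = ∅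

/-- `W` is a connected component of `(f^[n])⁻¹(B(z,r))` (a pullback of `B(z,r)` for `f^n`). -/
def IsPullbackComp (f : ℂ → ℂ) (n : ℕ) (z : ℂ) (r : ℝ) (W : Set ℂ) : Prop :=
  ∃ v, v ∈ (f^[n]) ⁻¹' (Metric.ball z r) ∧
    W = connectedComponentIn ((f^[n]) ⁻¹' (Metric.ball z r)) v

/-- `f` is backward uniformly asymptotically stable: diameters of all pullbacks of balls of
some fixed radius `r₀` centered on the Julia set tend to `0` uniformly as `n → ∞`. -/
def BUAS (f : ℂ → ℂ) : Prop :=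
  ∃ r₀ > 0, ∀ ε > 0, ∃ N : ℕ, ∀ n ≥ N, ∀ z ∈ juliaSet f, ∀ W : Set ℂ,
    IsPullbackComp f n z r₀ W → Metric.diam W ≤ ε

/-- The tree pressure `P_tree(f,t,z)`. -/
def treePressure (f : ℂ → ℂ) (t : ℝ) (z : ℂ) : ℝ :=
  Filter.limsup (fun n : ℕ =>
    (1 / (n : ℝ)) * Real.log (∑' v : ((f^[n]) ⁻¹' {z} : Set ℂ),
      ‖deriv (f^[n]) v‖ ^ (-t))) Filter.atTop

/-- `Y` is an `(n,ε)`-separated set. -/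
def IsSepSet (f : ℂ → ℂ) (n : ℕ) (ε : ℝ) (Y : Finset ℂ) : Prop :=
  ∀ y₁ ∈ Y, ∀ y₂ ∈ Y, y₁ ≠ y₂ → ∃ j ≤ n, ε ≤ dist (f^[j] y₁) (f^[j] y₂)

/-- The topological pressure of `f` restricted to `X` with potential `-t log |f'|`,
via `(n,ε)`-separated sets. -/
def pressureOn (f : ℂ → ℂ) (X : Set ℂ) (t : ℝ) : ℝ :=
  Filter.limsup (fun ε : ℝ =>
    Filter.limsup (fun n : ℕ => (1 / (n : ℝ)) * Real.log
      (sSup {s : ℝ | ∃ Y : Finset ℂ, ↑Y ⊆ X ∧ IsSepSet f n ε Y ∧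
        s = ∑ y ∈ Y, ‖deriv (f^[n]) y‖ ^ (-t)})) Filter.atTop)
    (𝓝[>] (0 : ℝ))

/-- `X` is a compact forward-invariant topologically exact hyperbolic subset of the Julia set. -/
def IsHypSubset (f : ℂ → ℂ) (X : Set ℂ) : Prop :=
  IsCompact X ∧ X ⊆ juliaSet f ∧ f '' X ⊆ X ∧
  (∀ U : Set ℂ, IsOpen U → (U ∩ X).Nonempty → ∃ n : ℕ, X ⊆ f^[n] '' (U ∩ X)) ∧
  ∃ C > 0, ∃ lam > 1, ∀ x ∈ X, ∀ n : ℕ, C * lam ^ n ≤ ‖deriv (f^[n]) x‖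

/-- The hyperbolic pressure `P_hyp(f,t)`. -/
def hypPressure (f : ℂ → ℂ) (t : ℝ) : ℝ :=
  sSup {p : ℝ | ∃ X : Set ℂ, IsHypSubset f X ∧ p = pressureOn f X t}

open Bornology Polynomial

theorem IsCompact.exists_forall_mapsTo_ball {α β : Type*} [PseudoMetricSpace α]
    [PseudoMetricSpace β] {s : Set α} (hs : IsCompact s) {g : α → β}
    (hg : ∀ a ∈ s, ContinuousAt g a) {r : ℝ} (hr : 0 < r) :
    ∃ δ > 0, ∀ z ∈ s, MapsTo g (ball z δ) (ball (g z) r) := by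
  obtain ⟨δ, hδ, h⟩ := Metric.mem_uniformity_dist.mp
    (hs.uniformContinuousAt_of_continuousAt g hg (Metric.dist_mem_uniformity hr))
  refine ⟨δ, hδ, fun z hz w hw => ?_⟩
  rw [mem_ball, dist_comm] at hw ⊢
  exact h hw hz

theorem Bornology.IsBounded.preimage_of_tendsto_cobounded {α β : Type*} [Bornology α]
    [Bornology β] {f : α → β} (hf : Tendsto f (cobounded α) (cobounded β)) {s : Set β}
    (hs : IsBounded s) : IsBounded (f ⁻¹' s) :=
  isBounded_def.mpr (hf (isBounded_def.mp hs))

theorem Polynomial.eventually_norm_add_one_le_norm_eval {𝕜 : Type*} [NormedField 𝕜]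
    (p : 𝕜[X]) (hp : 2 ≤ p.natDegree) :
    ∀ᶠ z in cobounded 𝕜, ‖z‖ + 1 ≤ ‖p.eval z‖ := by
  have hdeg : 0 < p.divX.degree := by
    rw [← natDegree_pos_iff_degree_pos, natDegree_divX_eq_natDegree_tsub_one]
    omega
  filter_upwards
    [(p.divX.tendsto_norm_atTop hdeg tendsto_norm_cobounded_atTop).eventually_ge_atTop 2,
    tendsto_norm_cobounded_atTop.eventually_ge_atTop (‖p.coeff 0‖ + 1)] with z hdivX hz
  have hdecomp : p.eval z = p.divX.eval z * z + p.coeff 0 := by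
    conv_lhs => rw [← divX_mul_X_add p]
    simp
  calc ‖z‖ + 1 ≤ 2 * ‖z‖ - ‖p.coeff 0‖ := by linarith
    _ ≤ ‖p.divX.eval z‖ * ‖z‖ - ‖p.coeff 0‖ := by gcongr
    _ = ‖p.divX.eval z * z‖ - ‖-p.coeff 0‖ := by rw [norm_mul, norm_neg]
    _ ≤ ‖p.eval z‖ := by
      rw [hdecomp, ← sub_neg_eq_add]
      exact norm_sub_norm_le _ _

theorem Polynomial.tendsto_eval_cobounded {𝕜 : Type*} [NormedField 𝕜]
    (p : 𝕜[X]) (hp : 0 < p.degree) :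
    Tendsto p.eval (cobounded 𝕜) (cobounded 𝕜) :=
  tendsto_norm_atTop_iff_cobounded.mp (p.tendsto_norm_atTop hp tendsto_norm_cobounded_atTop)

theorem isBounded_setOf_isBounded_orbit {E : Type*} [SeminormedAddGroup E] {f : E → E}
    (hf : ∀ᶠ z in cobounded E, ‖z‖ + 1 ≤ ‖f z‖) :
    IsBounded {z | IsBounded (range fun n => f^[n] z)} := by
  obtain ⟨R, -, hR⟩ := hasBasis_cobounded_norm.eventually_iff.mp hf
  refine isBounded_iff_forall_norm_le.mpr ⟨R, fun z hz => ?_⟩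
  by_contra! hzR
  have hescape : ∀ n : ℕ, ‖z‖ + n ≤ ‖f^[n] z‖ := by
    intro n
    induction n with
    | zero => simp
    | succ n ih =>
      have hfar : R ≤ ‖f^[n] z‖ := by linarith [n.cast_nonneg (α := ℝ)]
      rw [Function.iterate_succ_apply', Nat.cast_succ, ← add_assoc]
      exact (add_le_add_left ih 1).trans (hR hfar)
  obtain ⟨C, hC⟩ := isBounded_iff_forall_norm_le.mp hz
  obtain ⟨n, hn⟩ := exists_nat_gt (C - ‖z‖)
  linarith [hescape n, hC _ (mem_range_self n)]

section Dynamics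

variable {f : ℂ → ℂ}

theorem preimage_filledJulia : f ⁻¹' filledJulia f = filledJulia f := by
  ext z
  have hsub : (range fun n => f^[n] (f z)) ⊆ range fun n => f^[n] z :=
    fun _ ⟨n, hn⟩ => ⟨n + 1, hn⟩
  have hsup : (range fun n => f^[n] z) ⊆ insert z (range fun n => f^[n] (f z)) := by
    rintro _ ⟨_ | n, rfl⟩
    exacts [mem_insert _ _, mem_insert_of_mem _ ⟨n, rfl⟩]
  exact ⟨fun h : IsBounded _ => (h.insert z).subset hsup, fun h : IsBounded _ => h.subset hsub⟩

theorem mapsTo_juliaSet (hf : Continuous f) : MapsTo f (juliaSet f) (juliaSet f) := by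
  intro z hz
  rw [juliaSet, ← preimage_filledJulia] at hz
  exact hf.frontier_preimage_subset _ hz

theorem IsPolyEvalDeg2.continuous (hf : IsPolyEvalDeg2 f) : Continuous f := by
  obtain ⟨p, -, hfp⟩ := hf
  simpa only [← funext hfp] using p.continuous

theorem IsPolyEvalDeg2.tendsto_cobounded (hf : IsPolyEvalDeg2 f) :
    Tendsto f (cobounded ℂ) (cobounded ℂ) := by
  obtain ⟨p, hp, hfp⟩ := hf
  have hdeg : 0 < p.degree := natDegree_pos_iff_degree_pos.mp (by omega)
  simpa only [← funext hfp] using p.tendsto_eval_cobounded hdeg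

theorem IsPolyEvalDeg2.isCompact_juliaSet (hf : IsPolyEvalDeg2 f) : IsCompact (juliaSet f) := by
  obtain ⟨p, hp, hfp⟩ := hf
  have hK : IsBounded (filledJulia f) := isBounded_setOf_isBounded_orbit <| by
    simpa only [hfp] using p.eventually_norm_add_one_le_norm_eval hp
  exact Metric.isCompact_of_isClosed_isBounded isClosed_frontier
    (hK.closure.subset frontier_subset_closure)

theorem IsPullbackComp.isBounded (hf : Tendsto f (cobounded ℂ) (cobounded ℂ)) {n : ℕ} {z : ℂ}
    {r : ℝ} {W : Set ℂ} (hW : IsPullbackComp f n z r W) : IsBounded W := by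
  obtain ⟨v, -, rfl⟩ := hW
  exact (Metric.isBounded_ball.preimage_of_tendsto_cobounded (hf.iterate n)).subset
    (connectedComponentIn_subset _ _)

theorem IsPullbackComp.exists_superset {n N : ℕ} {z w : ℂ} {δ r : ℝ} {W : Set ℂ}
    (hN : MapsTo f^[N] (ball z δ) (ball w r)) (hW : IsPullbackComp f n z δ W) :
    ∃ W', IsPullbackComp f (N + n) w r W' ∧ W ⊆ W' := by
  obtain ⟨v, hv, rfl⟩ := hW
  have hsub : f^[n] ⁻¹' ball z δ ⊆ f^[N + n] ⁻¹' ball w r := fun x hx => by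
    rw [mem_preimage, Function.iterate_add_apply]
    exact hN hx
  exact ⟨_, ⟨v, hsub hv, rfl⟩, connectedComponentIn_mono v hsub⟩

end Dynamics

/-- for a backward uniformly asymptotically stable polynomial map of degree at
least `2`, the supremum over all `n` and all `z ∈ J(f)` of the diameters of connected
components of `(f^[n])⁻¹(B(z,r))` tends to `0` as `r → 0⁺`. -/
theorem sup_diam_pullbacks_tendsto_zero (f : ℂ → ℂ) (hf : IsPolyEvalDeg2 f)
    (hbuas : BUAS f) :
    ∀ ε > 0, ∃ r' > 0, ∀ n : ℕ, ∀ z ∈ juliaSet f, ∀ W : Set ℂ,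
      IsPullbackComp f n z r' W → Metric.diam W ≤ ε := by
  intro ε hε
  obtain ⟨r₀, hr₀, hstable⟩ := hbuas
  obtain ⟨N, hN⟩ := hstable ε hε
  obtain ⟨δ, hδ, hmaps⟩ := hf.isCompact_juliaSet.exists_forall_mapsTo_ball
    (fun _ _ => (hf.continuous.iterate N).continuousAt) hr₀
  refine ⟨δ, hδ, fun n z hz W hW => ?_⟩
  obtain ⟨W', hW', hWW'⟩ := hW.exists_superset (hmaps z hz)
  calc diam W ≤ diam W' := diam_mono hWW' (hW'.isBounded hf.tendsto_cobounded)
    _ ≤ ε := hN _ (N.le_add_right n) _ ((mapsTo_juliaSet hf.continuous).iterate N hz) W' hW'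

end
end

section
/- Let f : ℂ → ℂ be the evaluation map of a nonconstant complex polynomial. For every δ > 0 there exists δ' > 0 such that for every z ∈ ℂ, every connected component of f⁻¹(B(z, δ')) has diameter at most δ. -/
/-!
If `a` is the leading coefficient of `p` and `d` its degree, then `p w - z = a ∏ (w - r)` over the
roots `r` of `p - z`, so `‖p w - z‖ < ‖a‖ sᵈ` forces `w` to lie within `s` of one of these at most
`d` roots. A preconnected set covered by `k` balls of radius `s` has diameter at most `2 s k`: any
two of its points are joined by a chain of balls, consecutive ones meeting inside the set, and the
chain can be taken without repetition. Take `s = δ / (2 d)` and `δ' = ‖a‖ sᵈ`.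
-/

open Metric Set Polynomial

namespace Polynomial

variable {K : Type*} [NormedField K]

theorem Splits.norm_leadingCoeff_mul_pow_le_norm_eval {p : K[X]} (hp : p.Splits) {w : K}
    {s : ℝ} (hs : 0 ≤ s) (h : ∀ r ∈ p.roots, s ≤ dist w r) :
    ‖p.leadingCoeff‖ * s ^ p.natDegree ≤ ‖p.eval w‖ := by
  have hprod : s ^ p.natDegree ≤ (p.roots.map fun r => ‖w - r‖).prod := by
    simpa [hp.natDegree_eq_card_roots, dist_eq_norm] using
      Multiset.prod_map_le_prod_map₀ (fun _ => s) _ (fun _ _ => hs) h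
  have hnorm := map_multiset_prod (normHom : K →*₀ ℝ) (p.roots.map (w - ·))
  simp only [normHom_apply, Multiset.map_map, Function.comp_def] at hnorm
  rw [hp.eval_eq_prod_roots, norm_mul, hnorm]
  exact mul_le_mul_of_nonneg_left hprod (norm_nonneg _)

theorem preimage_eval_ball_subset_iUnion_ball_roots [IsAlgClosed K] {p : K[X]}
    (hp : 0 < p.natDegree) (z : K) {s : ℝ} (hs : 0 ≤ s) :
    (p.eval ·) ⁻¹' ball z (‖p.leadingCoeff‖ * s ^ p.natDegree) ⊆
      ⋃ r ∈ (p - C z).roots, ball r s := by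
  intro w hw
  have hlc : (p - C z).leadingCoeff = p.leadingCoeff :=
    leadingCoeff_sub_of_degree_lt (degree_C_le.trans_lt (natDegree_pos_iff_degree_pos.mp hp))
  by_contra! hfar
  simp only [mem_iUnion, mem_ball, not_exists, not_lt] at hfar
  have := (IsAlgClosed.splits (p - C z)).norm_leadingCoeff_mul_pow_le_norm_eval hs hfar
  rw [hlc, natDegree_sub_C, eval_sub, eval_C, ← dist_eq_norm] at this
  exact (mem_ball.mp hw).not_ge this

end Polynomial

variable {V X : Type*} [PseudoMetricSpace X] {G : SimpleGraph V} {c : V → X} {r : ℝ}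

theorem dist_le_mul_length_of_walk (hadj : ∀ i j, G.Adj i j → dist (c i) (c j) ≤ r) {u v : V}
    (W : G.Walk u v) : dist (c u) (c v) ≤ r * W.length := by
  induction W with
  | nil => simp
  | @cons u w v huw W ih =>
    calc dist (c u) (c v) ≤ dist (c u) (c w) + dist (c w) (c v) := dist_triangle _ _ _
      _ ≤ r + r * W.length := add_le_add (hadj u w huw) ih
      _ = r * (W.cons huw).length := by rw [SimpleGraph.Walk.length_cons]; push_cast; ring

theorem dist_le_mul_card_sub_one_of_reachable [Fintype V] (hr : 0 ≤ r)
    (hadj : ∀ i j, G.Adj i j → dist (c i) (c j) ≤ r) {u v : V} (h : G.Reachable u v) :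
    dist (c u) (c v) ≤ r * (Fintype.card V - 1) := by
  classical
  obtain ⟨W⟩ := h
  have hlen : (W.bypass.length : ℝ) ≤ Fintype.card V - 1 := by
    have := W.bypass_isPath.length_lt
    rw [le_sub_iff_add_le]
    exact_mod_cast this
  exact (dist_le_mul_length_of_walk hadj W.bypass).trans (by gcongr)

def ballCoverGraph (S : Set X) (t : Finset X) (s : ℝ) : SimpleGraph t :=
  SimpleGraph.fromRel fun i j => (S ∩ ball (i : X) s ∩ ball (j : X) s).Nonempty

theorem ballCoverGraph_adj_dist_le {S : Set X} {t : Finset X} {s : ℝ} {i j : t}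
    (h : (ballCoverGraph S t s).Adj i j) : dist (i : X) j ≤ 2 * s := by
  obtain ⟨-, ⟨w, ⟨-, hwi⟩, hwj⟩ | ⟨w, ⟨-, hwj⟩, hwi⟩⟩ := (SimpleGraph.fromRel_adj _ _ _).mp h <;>
  · rw [mem_ball] at hwi hwj
    linarith [dist_triangle_left (i : X) j w]

variable {S : Set X} {t : Finset X} {s : ℝ}

theorem IsPreconnected.exists_reachable_ballCoverGraph (hS : IsPreconnected S)
    (hcover : S ⊆ ⋃ c ∈ t, ball c s) {x y : X} (hx : x ∈ S) (hy : y ∈ S) :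
    ∃ i j : t, x ∈ ball (i : X) s ∧ y ∈ ball (j : X) s ∧ (ballCoverGraph S t s).Reachable i j := by
  have hcenter : ∀ a ∈ S, ∃ i : t, a ∈ ball (i : X) s := fun a ha => by
    simpa using hcover ha
  refine hS.induction₂ (fun a b => ∃ i j : t, a ∈ ball (i : X) s ∧ b ∈ ball (j : X) s ∧
      (ballCoverGraph S t s).Reachable i j)
    (fun a ha => ?_) (fun a b d _ hb _ => ?_) (fun a b _ _ => ?_) hx hy
  · obtain ⟨i, hai⟩ := hcenter a ha
    filter_upwards [mem_nhdsWithin_of_mem_nhds (isOpen_ball.mem_nhds hai)] with b hbi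
    exact ⟨i, i, hai, hbi, .rfl⟩
  · rintro ⟨i, j, hai, hbj, hij⟩ ⟨j', k, hbj', hdk, hj'k⟩
    have hjj' : (ballCoverGraph S t s).Reachable j j' := by
      by_cases hj : j = j'
      · exact hj ▸ .rfl
      · exact SimpleGraph.Adj.reachable <|
          (SimpleGraph.fromRel_adj _ _ _).mpr ⟨hj, .inl ⟨b, ⟨hb, hbj⟩, hbj'⟩⟩
    exact ⟨i, k, hai, hdk, hij.trans (hjj'.trans hj'k)⟩
  · rintro ⟨i, j, hai, hbj, hij⟩
    exact ⟨j, i, hbj, hai, hij.symm⟩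

theorem IsPreconnected.diam_le_of_subset_iUnion_ball (hS : IsPreconnected S) (hs : 0 ≤ s)
    (hcover : S ⊆ ⋃ c ∈ t, ball c s) : diam S ≤ 2 * s * t.card := by
  refine diam_le_of_forall_dist_le (by positivity) fun x hx y hy => ?_
  obtain ⟨i, j, hxi, hyj, hij⟩ := hS.exists_reachable_ballCoverGraph hcover hx hy
  have hcenters := dist_le_mul_card_sub_one_of_reachable (c := ((↑) : t → X))
    (by positivity) (fun _ _ => ballCoverGraph_adj_dist_le) hij
  rw [Fintype.card_coe] at hcenters
  rw [mem_ball] at hxi hyj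
  calc dist x y ≤ dist x i + dist (i : X) j + dist (j : X) y := dist_triangle4 _ _ _ _
    _ ≤ s + 2 * s * (t.card - 1) + s := by
      rw [dist_comm (j : X)]; gcongr
    _ = 2 * s * t.card := by ring

/-- for the evaluation map of a nonconstant complex polynomial, for every
`δ > 0` there is `δ' > 0` such that for every `z ∈ ℂ` each connected component of
`f⁻¹(B(z,δ'))` has diameter at most `δ`. -/
theorem diam_preimage_component_small (f : ℂ → ℂ) (p : Polynomial ℂ)
    (hdeg : 0 < p.natDegree) (hf : ∀ z, f z = p.eval z) :
    ∀ δ > 0, ∃ δ' > 0, ∀ z : ℂ, ∀ v ∈ f ⁻¹' (Metric.ball z δ'),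
      Metric.diam (connectedComponentIn (f ⁻¹' (Metric.ball z δ')) v) ≤ δ := by
  intro δ hδ
  obtain rfl : f = (p.eval ·) := funext hf
  set d := p.natDegree
  set s := δ / (2 * d)
  have hd : (0 : ℝ) < d := by exact_mod_cast hdeg
  have hs : 0 < s := by positivity
  have hlc : 0 < ‖p.leadingCoeff‖ :=
    norm_pos_iff.mpr (leadingCoeff_ne_zero.mpr (ne_zero_of_natDegree_gt hdeg))
  refine ⟨‖p.leadingCoeff‖ * s ^ d, by positivity, fun z v _ => ?_⟩
  have hcover := (connectedComponentIn_subset _ v).trans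
    (preimage_eval_ball_subset_iUnion_ball_roots hdeg z hs.le)
  simp_rw [← Multiset.mem_toFinset] at hcover
  have hcard : ((p - C z).roots.toFinset.card : ℝ) ≤ d := by
    exact_mod_cast (Multiset.toFinset_card_le _).trans ((card_roots' _).trans natDegree_sub_C.le)
  calc diam (connectedComponentIn _ v)
      ≤ 2 * s * (p - C z).roots.toFinset.card :=
        isPreconnected_connectedComponentIn.diam_le_of_subset_iUnion_ball hs.le hcover
    _ ≤ 2 * s * d := by gcongr
    _ = δ := by simp only [s]; field_simp
end

section
/- Let f : ℂ → ℂ be the evaluation map of a complex polynomial of degree ≥ 2 which is backward uniformly asymptotically stable, and let z ∈ J(f) be non-exceptional. Then there is r₁ > 0 such that for every r ∈ (0, r₁] and every ε > 0 there exists a constant C > 0 with: for every n ∈ ℕ and every v ∈ (f^[n])⁻¹{z}, diam(W)·|deriv (f^[n]) v| ≥ C·exp(−n·ε), where W is the connected component of (f^[n])⁻¹(B(z,r)) containing v. -/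
open Filter Metric Set Topology

noncomputable section

/-!
Write `F = f^n`. Non-exceptionality of `z` keeps the ball `B(z, δₙ)`, with
`δₙ = min(r, exp(-max(n, N)·ε))`, free of critical values of `F`. A polynomial is a covering map
over its regular values, so the simply connected ball lifts to a holomorphic inverse branch
`g : B(z, δₙ) → W` with `g z = v` and `g'(z) = 1 / F'(v)`. The Schwarz lemma applied to `g`
gives `δₙ / |F'(v)| ≤ diam W`, and `δₙ ≥ min(r, exp(-N·ε))·exp(-n·ε)`.
-/

open Polynomial

theorem Polynomial.exists_rightInverse_hasDerivAt (p : ℂ[X]) {z v : ℂ} {δ : ℝ} (hδ : 0 < δ)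
    (hv : p.eval v = z) (hreg : ∀ x, p.eval x ∈ ball z δ → p.derivative.eval x ≠ 0) :
    ∃ g : ℂ → ℂ, g z = v ∧
      ∀ w ∈ ball z δ, p.eval (g w) = w ∧ HasDerivAt g (p.derivative.eval (g w))⁻¹ w := by
  classical
  have hcov : IsCoveringMapOn p.eval (ball z δ) :=
    p.isCoveringMapOn_eval.mono fun _ hw ⟨x, hx, hxw⟩ => hreg x (by rwa [← hxw] at hw) hx
  have hz : z ∈ ball z δ := mem_ball_self hδ
  have := (convex_ball z δ).contractibleSpace ⟨z, hz⟩
  have : LocallyPathConnectedSpace (ball z δ) := isOpen_ball.locallyPathConnectedSpace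
  obtain ⟨G, ⟨hGz, hGp⟩, -⟩ := hcov.existsUnique_continuousMap_lifts
    ⟨Subtype.val, continuous_subtype_val⟩ (a₀ := ⟨z, hz⟩) hv fun w => w.2
  set g : ℂ → ℂ := fun w => if h : w ∈ ball z δ then G ⟨w, h⟩ else v
  have hgG : ∀ w (hw : w ∈ ball z δ), g w = G ⟨w, hw⟩ := fun w hw => dif_pos hw
  have hgp : ∀ w ∈ ball z δ, p.eval (g w) = w := fun w hw => by
    rw [hgG w hw]; exact congrFun hGp ⟨w, hw⟩
  have hg : ContinuousOn g (ball z δ) := by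
    rw [continuousOn_iff_continuous_domRestrict]
    convert G.continuous using 1
    ext w
    exact hgG w.1 w.2
  refine ⟨g, (hgG z hz).trans hGz, fun w hw => ⟨hgp w hw, ?_⟩⟩
  exact .of_local_left_inverse (hg.continuousAt (isOpen_ball.mem_nhds hw)) (p.hasDerivAt _)
    (hreg _ ((hgp w hw).symm ▸ hw)) (eventually_of_mem (isOpen_ball.mem_nhds hw) hgp)

theorem Complex.mul_norm_deriv_le_diam {E : Type*} [NormedAddCommGroup E] [NormedSpace ℂ E]
    {g : ℂ → E} {z : ℂ} {δ : ℝ} {W : Set E}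
    (hg : DifferentiableOn ℂ g (ball z δ)) (hδ : 0 < δ) (hW : Bornology.IsBounded W)
    (hgW : MapsTo g (ball z δ) W) : δ * ‖deriv g z‖ ≤ diam W := by
  have hmaps : MapsTo g (ball z δ) (closedBall (g z) (diam W)) := fun w hw =>
    dist_le_diam_of_mem hW (hgW hw) (hgW (mem_ball_self hδ))
  have := Complex.norm_deriv_le_div_of_mapsTo_ball hg hmaps hδ
  rwa [le_div_iff₀ hδ, mul_comm] at this

theorem Polynomial.le_diam_connectedComponentIn_mul_norm_derivative (p : ℂ[X]) {z v : ℂ}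
    {δ r : ℝ} (hδ : 0 < δ) (hδr : δ ≤ r) (hv : p.eval v = z)
    (hreg : ∀ x, p.eval x ∈ ball z δ → p.derivative.eval x ≠ 0) :
    δ ≤ diam (connectedComponentIn (p.eval ⁻¹' ball z r) v) * ‖p.derivative.eval v‖ := by
  set W := connectedComponentIn (p.eval ⁻¹' ball z r) v
  have hz : z ∈ ball z δ := mem_ball_self hδ
  have hv' : p.derivative.eval v ≠ 0 := hreg v (hv ▸ hz)
  have hp : 0 < p.degree := by
    refine natDegree_pos_iff_degree_pos.mp (Nat.pos_of_ne_zero fun h => hv' ?_)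
    rw [eq_C_of_natDegree_eq_zero h, derivative_C, eval_zero]
  have hW : Bornology.IsBounded W :=
    ((p.isProperMap_eval hp).isCompact_preimage (isCompact_closedBall z r)).isBounded.subset
      ((connectedComponentIn_subset _ _).trans (preimage_mono ball_subset_closedBall))
  obtain ⟨g, hgz, hg⟩ := p.exists_rightInverse_hasDerivAt hδ hv hreg
  have hgW : MapsTo g (ball z δ) W := by
    refine mapsTo_iff_image_subset.mpr (IsPreconnected.subset_connectedComponentIn ?_
      ⟨z, hz, hgz⟩ ?_)
    · exact (convex_ball z δ).isPreconnected.image g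
        fun w hw => (hg w hw).2.continuousAt.continuousWithinAt
    · rintro _ ⟨w, hw, rfl⟩
      rw [mem_preimage, (hg w hw).1]
      exact ball_subset_ball hδr hw
  have hSchwarz := Complex.mul_norm_deriv_le_diam
    (fun w hw => (hg w hw).2.differentiableAt.differentiableWithinAt) hδ hW hgW
  rwa [(hg z hz).2.deriv, hgz, norm_inv, ← div_eq_mul_inv, div_le_iff₀ (norm_pos_iff.mpr hv')]
    at hSchwarz

theorem exists_lt_iterate_mem_critSet {f : ℂ → ℂ} (hf : Differentiable ℂ f) :
    ∀ {n : ℕ} {x : ℂ}, deriv (f^[n]) x = 0 → ∃ i < n, f^[i] x ∈ critSet f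
  | 0, x, hx => by simp at hx
  | n + 1, x, hx => by
    rw [Function.iterate_succ, deriv_comp x ((hf.iterate n) (f x)) (hf x), mul_eq_zero] at hx
    rcases hx with hx | hx
    · obtain ⟨i, hi, hcrit⟩ := exists_lt_iterate_mem_critSet hf hx
      exact ⟨i + 1, by omega, hcrit⟩
    · exact ⟨0, n.succ_pos, hx⟩

theorem NonExceptional.exists_deriv_iterate_ne_zero {f : ℂ → ℂ} (hf : Differentiable ℂ f)
    {z : ℂ} (hz : NonExceptional f z) {ε : ℝ} (hε : 0 < ε) :
    ∃ N : ℕ, ∀ n x, f^[n] x ∈ ball z (Real.exp (-(max n N : ℕ) * ε)) →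
      deriv (f^[n]) x ≠ 0 := by
  obtain ⟨N, hN⟩ := hz ε hε
  refine ⟨N, fun n x hx hcrit => ?_⟩
  obtain ⟨i, hi, hxi⟩ := exists_lt_iterate_mem_critSet hf hcrit
  have hcv : f^[n] x ∈ f^[n - i] '' critSet f :=
    ⟨_, hxi, by rw [← Function.iterate_add_apply, Nat.sub_add_cancel hi.le]⟩
  have := hN (max n N) (le_max_right n N) (n - i) (by omega) (by omega)
  exact this.subset ⟨hx, hcv⟩

theorem diam_mul_deriv_ge_general (f : ℂ → ℂ) (hf : IsPolyEvalDeg2 f)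
    (z : ℂ) (hz : NonExceptional f z) :
    ∃ r₁ > 0, ∀ r : ℝ, 0 < r → r ≤ r₁ → ∀ ε > 0, ∃ C > 0, ∀ n : ℕ,
      ∀ v ∈ (f^[n]) ⁻¹' {z},
        C * Real.exp (-(n : ℝ) * ε) ≤
          Metric.diam (connectedComponentIn ((f^[n]) ⁻¹' (Metric.ball z r)) v) *
            ‖deriv (f^[n]) v‖ := by
  obtain ⟨p, -, hfp⟩ := hf
  obtain rfl : f = fun x => p.eval x := funext hfp
  refine ⟨1, one_pos, fun r hr _ ε hε => ?_⟩
  obtain ⟨N, hN⟩ := hz.exists_deriv_iterate_ne_zero p.differentiable hε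
  refine ⟨min r (Real.exp (-N * ε)), by positivity, fun n v hv => ?_⟩
  set δ := min r (Real.exp (-(max n N : ℕ) * ε))
  have hq : (fun x => p.eval x)^[n] = fun x => (p.comp^[n] X).eval x := by
    ext x
    simp
  have hδ : min r (Real.exp (-N * ε)) * Real.exp (-n * ε) ≤ δ := by
    rw [min_mul_of_nonneg _ _ (Real.exp_pos _).le, ← Real.exp_add]
    refine min_le_min (mul_le_of_le_one_right hr.le (Real.exp_le_one_iff.mpr ?_))
      (Real.exp_le_exp.mpr ?_)
    · nlinarith [(n.cast_nonneg : (0 : ℝ) ≤ n)]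
    · have : ((max n N : ℕ) : ℝ) ≤ N + n := by norm_cast; omega
      nlinarith
  have hreg := hN n
  rw [hq] at hv hreg
  simp only [Polynomial.deriv] at hreg
  rw [hq, Polynomial.deriv]
  exact hδ.trans <| (p.comp^[n] X).le_diam_connectedComponentIn_mul_norm_derivative
    (by positivity) (min_le_left _ _) hv fun x hx =>
      hreg x (ball_subset_ball (min_le_right _ _) hx)

/-- for a backward uniformly asymptotically stable polynomial map of degree at
least `2` and a non-exceptional `z ∈ J(f)`, for all sufficiently small `r > 0` and every
`ε > 0` there is `C > 0` such that for all `n` and all `v ∈ (f^[n])⁻¹{z}`,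
`diam(W) · |(f^n)'(v)| ≥ C · exp(−n·ε)`, where `W` is the connected component of
`(f^[n])⁻¹(B(z,r))` containing `v`. -/
theorem diam_mul_deriv_ge (f : ℂ → ℂ) (hf : IsPolyEvalDeg2 f) (hbuas : BUAS f)
    (z : ℂ) (hzJ : z ∈ juliaSet f) (hz : NonExceptional f z) :
    ∃ r₁ > 0, ∀ r : ℝ, 0 < r → r ≤ r₁ → ∀ ε > 0, ∃ C > 0, ∀ n : ℕ,
      ∀ v ∈ (f^[n]) ⁻¹' {z},
        C * Real.exp (-(n : ℝ) * ε) ≤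
          Metric.diam (connectedComponentIn ((f^[n]) ⁻¹' (Metric.ball z r)) v) *
            ‖deriv (f^[n]) v‖ :=
  diam_mul_deriv_ge_general f hf z hz
end
end

section
/- Let m ≥ 1 and let A be an m × m real matrix with nonnegative entries which is primitive, i.e. there exists N ≥ 1 such that every entry of A^N is strictly positive. Then there exists λ > 0 such that for every pair of indices (i,j), ((A^k)_{ij})^{1/k} → λ as k → ∞, and moreover ‖A^k‖^{1/k} → λ as k → ∞; in particular the limit lim_k ((A^k)_{ij})^{1/k} exists and is independent of the position (i,j), and equals the spectral radius of A. -/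
/-!
Viewing `A` as a complex matrix, Gelfand's formula gives `‖A ^ k‖ ^ (1 / k) → ρ`, the complex
spectral radius, and `ρ = |z|` for some eigenvalue `z`. If `A v = z v`, the vector `|v|` of
moduli satisfies `ρ |v| ≤ A |v|`. On the other hand `s • w ≤ A *ᵥ w` with some `w i > 0` gives
`s ^ k * w i ≤ ‖A ^ k‖ * ‖w‖`, hence `s ≤ ρ`. If `ρ |v| ≤ A |v|` were strict somewhere, the
positive matrix `A ^ N` would make the gap positive in every entry, and `w = A ^ N *ᵥ |v|` would
satisfy `(ρ + ε) • w ≤ A *ᵥ w`. So `ρ` is a real eigenvalue, and it bounds the real spectral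
radius from both sides. For the entries, with `δ` the least entry of `A ^ N`,
`δ ^ 2 * ‖A ^ k‖ ≤ (A ^ (k + 2 N)) i j ≤ ‖A ^ (k + 2 N)‖`.
-/

open Filter Topology
open scoped ENNReal

attribute [local instance] Matrix.linftyOpNormedRing Matrix.linftyOpNormedAlgebra

theorem tendsto_const_rpow_one_div_nat {c : ℝ} (hc : 0 < c) :
    Tendsto (fun k : ℕ => c ^ (1 / (k : ℝ))) atTop (𝓝 1) := by
  simpa using tendsto_const_nhds.rpow (tendsto_const_div_atTop_nhds_zero_nat 1) (Or.inl hc.ne')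

theorem tendsto_rpow_one_div_of_le_of_mul_le_shift {f g : ℕ → ℝ} {r c : ℝ} {p : ℕ}
    (hc : 0 < c) (hf : ∀ k, 0 ≤ f k) (hlim : Tendsto (fun k : ℕ => f k ^ (1 / (k : ℝ))) atTop (𝓝 r))
    (hle : ∀ k, g k ≤ f k) (hshift : ∀ k, c * f k ≤ g (k + p)) :
    Tendsto (fun k : ℕ => g k ^ (1 / (k : ℝ))) atTop (𝓝 r) := by
  rw [← tendsto_add_atTop_iff_nat p]
  have hupper : Tendsto (fun k : ℕ => f (k + p) ^ (1 / ((k + p : ℕ) : ℝ))) atTop (𝓝 r) :=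
    (tendsto_add_atTop_iff_nat p).mpr hlim
  have hlower : Tendsto (fun k : ℕ => c ^ (1 / ((k + p : ℕ) : ℝ)) *
      (f k ^ (1 / (k : ℝ))) ^ ((k : ℝ) / (k + p))) atTop (𝓝 r) := by
    simpa using ((tendsto_add_atTop_iff_nat p).mpr (tendsto_const_rpow_one_div_nat hc)).mul
      (hlim.rpow (tendsto_natCast_div_add_atTop (p : ℝ)) (Or.inr one_pos))
  refine tendsto_of_tendsto_of_tendsto_of_le_of_le' hlower hupper ?_ ?_
  · filter_upwards [eventually_ne_atTop 0] with k hk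
    have hexp : 1 / (k : ℝ) * (k / (k + p)) = 1 / ((k + p : ℕ) : ℝ) := by
      push_cast
      field_simp
    rw [← Real.rpow_mul (hf k), hexp, ← Real.mul_rpow hc.le (hf k)]
    exact Real.rpow_le_rpow (mul_nonneg hc.le (hf k)) (hshift k) (by positivity)
  · exact Eventually.of_forall fun k => Real.rpow_le_rpow
      ((mul_nonneg hc.le (hf k)).trans (hshift k)) (hle _) (by positivity)

theorem exists_pos_smul_le {ι : Type*} [Finite ι] {u : ι → ℝ} (hu : ∀ i, 0 < u i) (w : ι → ℝ) :
    ∃ ε > (0 : ℝ), ε • w ≤ u := by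
  have hsmall : ∀ᶠ ε in 𝓝[>] (0 : ℝ), ∀ i, ε * w i < u i :=
    nhdsWithin_le_nhds <| eventually_all.2 fun i =>
      ((continuous_mul_const (w i)).tendsto' 0 0 (zero_mul _)).eventually
        (eventually_lt_nhds (hu i))
  obtain ⟨ε, hε, hεpos⟩ := (hsmall.and self_mem_nhdsWithin).exists
  exact ⟨ε, hεpos, fun i => (hε i).le⟩

namespace Matrix

variable {n : Type*} [Fintype n]

theorem mem_spectrum_iff_exists_mulVec_eq_smul [DecidableEq n] {K : Type*} [Field K]
    {B : Matrix n n K} {μ : K} : μ ∈ spectrum K B ↔ ∃ v ≠ 0, B *ᵥ v = μ • v := by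
  rw [← spectrum_toLin', ← Module.End.hasEigenvalue_iff_mem_spectrum,
    Module.End.hasEigenvalue_iff, Submodule.ne_bot_iff]
  simp [toLin'_apply, and_comm]

section Nonneg

variable {A : Matrix n n ℝ}

theorem mulVec_mono_of_nonneg (hA : ∀ i j, 0 ≤ A i j) {v w : n → ℝ} (h : v ≤ w) :
    A *ᵥ v ≤ A *ᵥ w := fun i =>
  Finset.sum_le_sum fun j _ => mul_le_mul_of_nonneg_left (h j) (hA i j)

theorem mulVec_pos (hA : ∀ i j, 0 < A i j) {x : n → ℝ} (hx : 0 ≤ x) (hx0 : x ≠ 0) (i : n) :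
    0 < (A *ᵥ x) i := by
  obtain ⟨j, hj⟩ := Function.ne_iff.mp hx0
  exact Finset.sum_pos' (fun k _ => mul_nonneg (hA i k).le (hx k))
    ⟨j, Finset.mem_univ j, mul_pos (hA i j) ((hx j).lt_of_ne' hj)⟩

theorem sq_mul_sum_sum_le_mul_mul_apply {B C : Matrix n n ℝ} {δ : ℝ} (hδ : 0 ≤ δ)
    (hB : ∀ i j, δ ≤ B i j) (hC : ∀ i j, 0 ≤ C i j) (i j : n) :
    δ ^ 2 * ∑ s, ∑ t, C s t ≤ (B * C * B) i j := by
  have hBC (t : n) : ∑ s, δ * C s t ≤ (B * C) i t :=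
    Finset.sum_le_sum fun s _ => mul_le_mul_of_nonneg_right (hB i s) (hC s t)
  calc δ ^ 2 * ∑ s, ∑ t, C s t = ∑ t, (∑ s, δ * C s t) * δ := by
        simp_rw [Finset.mul_sum, Finset.sum_mul]
        rw [Finset.sum_comm]
        ring_nf
    _ ≤ ∑ t, (B * C) i t * B t j :=
        Finset.sum_le_sum fun t _ => mul_le_mul (hBC t) (hB t j) hδ
          ((Finset.sum_nonneg fun s _ => mul_nonneg hδ (hC s t)).trans (hBC t))
    _ = (B * C * B) i j := (mul_apply ..).symm

end Nonneg

variable [DecidableEq n]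

section LinftyNorm

variable {α : Type*} [NormedRing α]

theorem norm_apply_le_linfty_opNorm (B : Matrix n n α) (i j : n) : ‖B i j‖ ≤ ‖B‖ := by
  rw [← coe_nnnorm, ← coe_nnnorm, NNReal.coe_le_coe, linfty_opNNNorm_def]
  exact (Finset.single_le_sum (fun _ _ => zero_le) (Finset.mem_univ j)).trans
    (Finset.le_sup (f := fun i => ∑ j, ‖B i j‖₊) (Finset.mem_univ i))

theorem linfty_opNorm_le_sum_sum_norm (B : Matrix n n α) : ‖B‖ ≤ ∑ i, ∑ j, ‖B i j‖ := by
  rw [← coe_nnnorm, linfty_opNNNorm_def]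
  have : (Finset.univ.sup fun i => ∑ j, ‖B i j‖₊) ≤ ∑ i, ∑ j, ‖B i j‖₊ :=
    Finset.sup_le fun i _ => Finset.single_le_sum (f := fun i => ∑ j, ‖B i j‖₊)
      (fun _ _ => zero_le) (Finset.mem_univ i)
  simpa using NNReal.coe_le_coe.mpr this

theorem linfty_opNNNorm_map {β : Type*} [NormedRing β] (B : Matrix n n α) {f : α → β}
    (hf : ∀ a, ‖f a‖₊ = ‖a‖₊) : ‖B.map f‖₊ = ‖B‖₊ := by
  simp only [linfty_opNNNorm_def, map_apply, hf]

end LinftyNorm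

section Gelfand

variable (B : Matrix n n ℝ)

theorem tendsto_nnnorm_pow_rpow_spectralRadius_map_ofReal :
    Tendsto (fun k : ℕ => (‖B ^ k‖₊ : ℝ≥0∞) ^ (1 / (k : ℝ))) atTop
      (𝓝 (spectralRadius ℂ (B.map ((↑) : ℝ → ℂ)))) := by
  have : CompleteSpace (Matrix n n ℂ) := FiniteDimensional.complete ℂ _
  have hnorm (k : ℕ) : ‖B.map ((↑) : ℝ → ℂ) ^ k‖₊ = ‖B ^ k‖₊ :=
    (congrArg _ (Matrix.map_pow B Complex.ofRealHom k)).symm.trans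
      (linfty_opNNNorm_map _ Complex.nnnorm_real)
  simpa only [hnorm] using
    spectrum.pow_nnnorm_pow_one_div_tendsto_nhds_spectralRadius (B.map ((↑) : ℝ → ℂ))

variable [Nonempty n]

theorem tendsto_norm_pow_rpow_toReal_spectralRadius_map_ofReal :
    Tendsto (fun k : ℕ => ‖B ^ k‖ ^ (1 / (k : ℝ))) atTop
      (𝓝 (spectralRadius ℂ (B.map ((↑) : ℝ → ℂ))).toReal) := by
  have : CompleteSpace (Matrix n n ℂ) := FiniteDimensional.complete ℂ _
  have hfin : spectralRadius ℂ (B.map ((↑) : ℝ → ℂ)) ≠ ⊤ :=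
    ((spectrum.spectralRadius_le_nnnorm _).trans_lt ENNReal.coe_lt_top).ne
  refine ((ENNReal.tendsto_toReal hfin).comp
    (tendsto_nnnorm_pow_rpow_spectralRadius_map_ofReal B)).congr fun k => ?_
  rw [Function.comp_apply, ← ENNReal.toReal_rpow, ENNReal.coe_toReal, coe_nnnorm]

theorem spectralRadius_le_spectralRadius_map_ofReal :
    spectralRadius ℝ B ≤ spectralRadius ℂ (B.map ((↑) : ℝ → ℂ)) := by
  have : CompleteSpace (Matrix n n ℝ) := FiniteDimensional.complete ℝ _
  refine ge_of_tendsto ((tendsto_add_atTop_iff_nat 1).mpr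
    (tendsto_nnnorm_pow_rpow_spectralRadius_map_ofReal B)) (Eventually.of_forall fun k => ?_)
  simpa using spectrum.spectralRadius_le_pow_nnnorm_pow_one_div ℝ B k

end Gelfand

section GrowthRate

variable {A : Matrix n n ℝ} {r : ℝ}

theorem pow_smul_le_pow_mulVec (hA : ∀ i j, 0 ≤ A i j) {s : ℝ} (hs : 0 ≤ s) {w : n → ℝ}
    (h : s • w ≤ A *ᵥ w) (k : ℕ) : s ^ k • w ≤ (A ^ k) *ᵥ w := by
  induction k with
  | zero => simp
  | succ k ih =>
    calc s ^ (k + 1) • w = s ^ k • (s • w) := by rw [pow_succ, mul_smul]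
      _ ≤ s ^ k • (A *ᵥ w) := smul_le_smul_of_nonneg_left h (pow_nonneg hs k)
      _ = A *ᵥ (s ^ k • w) := (mulVec_smul A _ w).symm
      _ ≤ A *ᵥ ((A ^ k) *ᵥ w) := mulVec_mono_of_nonneg hA ih
      _ = (A ^ (k + 1)) *ᵥ w := by rw [mulVec_mulVec, ← pow_succ']

theorem le_of_smul_le_mulVec (hA : ∀ i j, 0 ≤ A i j)
    (hr : Tendsto (fun k : ℕ => ‖A ^ k‖ ^ (1 / (k : ℝ))) atTop (𝓝 r)) {s : ℝ} (hs : 0 ≤ s)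
    {w : n → ℝ} (hw : s • w ≤ A *ᵥ w) {i : n} (hi : 0 < w i) : s ≤ r := by
  have hwi : w i ≤ ‖w‖ := (Real.le_norm_self _).trans (norm_le_pi_norm w i)
  have hc : 0 < ‖w‖ / w i := div_pos (hi.trans_le hwi) hi
  have hbound (k : ℕ) : s ^ k ≤ ‖w‖ / w i * ‖A ^ k‖ := by
    rw [div_mul_eq_mul_div, le_div_iff₀ hi, mul_comm ‖w‖]
    calc s ^ k * w i ≤ ((A ^ k) *ᵥ w) i := pow_smul_le_pow_mulVec hA hs hw k i
      _ ≤ ‖(A ^ k) *ᵥ w‖ := (Real.le_norm_self _).trans (norm_le_pi_norm _ i)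
      _ ≤ ‖A ^ k‖ * ‖w‖ := linfty_opNorm_mulVec _ _
  have hlim : Tendsto (fun k : ℕ => (‖w‖ / w i) ^ (1 / (k : ℝ)) * ‖A ^ k‖ ^ (1 / (k : ℝ)))
      atTop (𝓝 r) := by
    simpa using (tendsto_const_rpow_one_div_nat hc).mul hr
  refine ge_of_tendsto hlim ((eventually_ne_atTop 0).mono fun k hk => ?_)
  rw [← Real.mul_rpow hc.le (norm_nonneg _)]
  calc s = (s ^ k) ^ (1 / (k : ℝ)) := by rw [one_div, Real.pow_rpow_inv_natCast hs hk]
    _ ≤ _ := Real.rpow_le_rpow (pow_nonneg hs k) (hbound k) (by positivity)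

variable {N : ℕ}

theorem tendsto_pow_apply_rpow (hA : ∀ i j, 0 ≤ A i j) (hN : ∀ i j, 0 < (A ^ N) i j)
    (hr : Tendsto (fun k : ℕ => ‖A ^ k‖ ^ (1 / (k : ℝ))) atTop (𝓝 r)) (i j : n) :
    Tendsto (fun k : ℕ => ((A ^ k) i j) ^ (1 / (k : ℝ))) atTop (𝓝 r) := by
  have : Nonempty n := ⟨i⟩
  obtain ⟨p, hp⟩ := Finite.exists_min (fun p : n × n => (A ^ N) p.1 p.2)
  refine tendsto_rpow_one_div_of_le_of_mul_le_shift (pow_pos (hN p.1 p.2) 2)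
    (fun k => norm_nonneg _) hr (p := 2 * N)
    (fun k => (Real.le_norm_self _).trans (norm_apply_le_linfty_opNorm _ i j)) fun k => ?_
  have hAk := pow_apply_nonneg hA k
  calc (A ^ N) p.1 p.2 ^ 2 * ‖A ^ k‖ ≤ (A ^ N) p.1 p.2 ^ 2 * ∑ s, ∑ t, (A ^ k) s t := by
        gcongr
        simpa only [Real.norm_of_nonneg (hAk _ _)] using linfty_opNorm_le_sum_sum_norm (A ^ k)
    _ ≤ (A ^ N * A ^ k * A ^ N) i j :=
        sq_mul_sum_sum_le_mul_mul_apply (hN _ _).le (fun i j => hp (i, j)) hAk i j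
    _ = (A ^ (k + 2 * N)) i j := by rw [← pow_add, ← pow_add, two_mul, add_comm N k, add_assoc]

theorem exists_norm_smul_le_mulVec (hA : ∀ i j, 0 ≤ A i j) {z : ℂ}
    (hz : z ∈ spectrum ℂ (A.map ((↑) : ℝ → ℂ))) :
    ∃ x : n → ℝ, 0 ≤ x ∧ x ≠ 0 ∧ ‖z‖ • x ≤ A *ᵥ x := by
  obtain ⟨v, hv0, hv⟩ := mem_spectrum_iff_exists_mulVec_eq_smul.mp hz
  refine ⟨fun i => ‖v i‖, fun i => norm_nonneg _,
    fun h => hv0 (funext fun i => norm_eq_zero.mp (congr_fun h i)), fun i => ?_⟩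
  calc ‖z‖ * ‖v i‖ = ‖(A.map ((↑) : ℝ → ℂ) *ᵥ v) i‖ := by
        rw [hv, Pi.smul_apply, smul_eq_mul, norm_mul]
    _ ≤ ∑ j, ‖(A i j : ℂ) * v j‖ := norm_sum_le _ _
    _ = (A *ᵥ fun i => ‖v i‖) i := by
        simp [mulVec, dotProduct, Complex.norm_real, abs_of_nonneg (hA _ _)]

theorem mulVec_eq_smul_of_smul_le_mulVec (hA : ∀ i j, 0 ≤ A i j) (hN : ∀ i j, 0 < (A ^ N) i j)
    (hr : Tendsto (fun k : ℕ => ‖A ^ k‖ ^ (1 / (k : ℝ))) atTop (𝓝 r)) {x : n → ℝ} (hx : 0 ≤ x)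
    (hx0 : x ≠ 0) (hrx : r • x ≤ A *ᵥ x) : A *ᵥ x = r • x := by
  by_contra hne
  obtain ⟨i, -⟩ := Function.ne_iff.mp hx0
  set w := (A ^ N) *ᵥ x
  obtain ⟨ε, hε, hεw⟩ := exists_pos_smul_le
    (mulVec_pos hN (sub_nonneg.mpr hrx) (sub_ne_zero.mpr hne)) w
  have hw : (r + ε) • w ≤ A *ᵥ w := by
    have hcomm : A *ᵥ w = r • w + (A ^ N) *ᵥ (A *ᵥ x - r • x) := by
      simp only [w, mulVec_sub, mulVec_smul, mulVec_mulVec, ← pow_succ, ← pow_succ']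
      abel
    rw [hcomm, add_smul]
    exact add_le_add_right hεw _
  have hr0 : 0 ≤ r := ge_of_tendsto' hr fun k => Real.rpow_nonneg (norm_nonneg _) _
  linarith [le_of_smul_le_mulVec hA hr (by positivity) hw (mulVec_pos hN hx hx0 i)]

theorem pos_of_mulVec_eq_smul (hN1 : 1 ≤ N) (hN : ∀ i j, 0 < (A ^ N) i j) {x : n → ℝ}
    (hx : 0 ≤ x) (hx0 : x ≠ 0) (hr : 0 ≤ r) (hAx : A *ᵥ x = r • x) : 0 < r := by
  refine hr.lt_of_ne fun hr0 => ?_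
  obtain ⟨i, -⟩ := Function.ne_iff.mp hx0
  obtain ⟨M, rfl⟩ := Nat.exists_eq_add_of_le' hN1
  have := mulVec_pos hN hx hx0 i
  rw [pow_succ, ← mulVec_mulVec, hAx, ← hr0, zero_smul, mulVec_zero] at this
  exact this.false

end GrowthRate

end Matrix

/-- for a primitive nonnegative `m × m` real matrix `A` there is `λ > 0` such
that `((A^k)_{ij})^{1/k} → λ` for every position `(i,j)`, and `‖A^k‖^{1/k} → λ` (here for the
`ℓ∞` operator norm); this common limit is the spectral radius of `A`. -/
theorem primitive_matrix_growth_rate (m : ℕ) (hm : 1 ≤ m)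
    (A : Matrix (Fin m) (Fin m) ℝ) (hnn : ∀ i j, 0 ≤ A i j)
    (hprim : ∃ N : ℕ, 1 ≤ N ∧ ∀ i j, 0 < (A ^ N) i j) :
    ∃ lam : ℝ, 0 < lam ∧
      (∀ i j, Filter.Tendsto (fun k : ℕ => ((A ^ k) i j) ^ (1 / (k : ℝ)))
        Filter.atTop (nhds lam)) ∧
      Filter.Tendsto (fun k : ℕ => ‖A ^ k‖ ^ (1 / (k : ℝ))) Filter.atTop (nhds lam) ∧
      ENNReal.ofReal lam = spectralRadius ℝ A := by
  obtain ⟨N, hN1, hN⟩ := hprim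
  have : Nonempty (Fin m) := ⟨⟨0, hm⟩⟩
  have : CompleteSpace (Matrix (Fin m) (Fin m) ℂ) := FiniteDimensional.complete ℂ _
  obtain ⟨z, hz, hzρ⟩ := spectrum.exists_nnnorm_eq_spectralRadius (A.map ((↑) : ℝ → ℂ))
  have hρ : ENNReal.ofReal ‖z‖ = spectralRadius ℂ (A.map ((↑) : ℝ → ℂ)) := by
    rw [← hzρ, ofReal_norm, enorm_eq_nnnorm]
  have hnorm : Tendsto (fun k : ℕ => ‖A ^ k‖ ^ (1 / (k : ℝ))) atTop (𝓝 ‖z‖) := by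
    simpa [← hzρ] using Matrix.tendsto_norm_pow_rpow_toReal_spectralRadius_map_ofReal A
  obtain ⟨x, hx, hx0, hzx⟩ := Matrix.exists_norm_smul_le_mulVec hnn hz
  have heig := Matrix.mulVec_eq_smul_of_smul_le_mulVec hnn hN hnorm hx hx0 hzx
  have hmem : ‖z‖ ∈ spectrum ℝ A := Matrix.mem_spectrum_iff_exists_mulVec_eq_smul.mpr ⟨x, hx0, heig⟩
  refine ⟨‖z‖, Matrix.pos_of_mulVec_eq_smul hN1 hN hx hx0 (norm_nonneg z) heig,
    Matrix.tendsto_pow_apply_rpow hnn hN hnorm, hnorm, le_antisymm ?_ ?_⟩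
  · rw [ofReal_norm, enorm_eq_nnnorm, ← nnnorm_norm]
    exact le_iSup₂ (f := fun (μ : ℝ) _ => (‖μ‖₊ : ℝ≥0∞)) _ hmem
  · exact hρ ▸ Matrix.spectralRadius_le_spectralRadius_map_ofReal A
end

section
/- Let f : ℂ → ℂ be any function and S ⊆ ℂ a finite set. Define the exceptional set E = { z ∈ ℂ : there exists ε > 0 such that for infinitely many n ∈ ℕ there exist j with 1 ≤ j ≤ n and c ∈ S with dist(z, f^[j] c) < exp(−n·ε) }. Then the Hausdorff dimension of E is zero: dimH E = 0. (Equivalently: the set of points of ℂ that are not non-exceptional for f, with Crit(f) replaced by S, has Hausdorff dimension 0.) -/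
/-!
Fix `ε > 0`. A point approached at rate `ε` lies, for infinitely many `n`, in one of the `n * #S`
balls of radius `exp (-n * ε)` around the points `f^[j] c` with `1 ≤ j ≤ n` and `c ∈ S`. For every
`d > 0` the series `∑ n, n * #S * (2 * exp (-n * ε)) ^ d` converges, and covering the limsup of
these levels by all the balls of levels `≥ N` shows, as in the Borel–Cantelli lemma, that it has
`d`-dimensional Hausdorff measure zero. Hence it has dimension zero, and so does the exceptional
set, which is the countable union of these sets over `ε = 1 / (k + 1)`.
-/

open Filter Metric Set MeasureTheory Measure Topology ENNReal

theorem hausdorffMeasure_limsup_iUnion_eq_zero {X : Type*} [EMetricSpace X] [MeasurableSpace X]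
    [BorelSpace X] {ι : ℕ → Type*} [∀ n, Countable (ι n)] {d : ℝ} (hd : 0 < d)
    (t : ∀ n, ι n → Set X) (hsum : ∑' n, ∑' i, ediam (t n i) ^ d ≠ ∞) :
    μH[d] (limsup (fun n => ⋃ i, t n i) atTop) = 0 := by
  set tail : ℕ → ℝ≥0∞ := fun N => ∑' k, ∑' i, ediam (t (k + N) i) ^ d
  have htail : Tendsto tail atTop (𝓝 0) := ENNReal.tendsto_sum_nat_add _ hsum
  have hr : Tendsto (fun N => tail N ^ d⁻¹) atTop (𝓝 0) := by
    have := ((ENNReal.continuous_rpow_const (y := d⁻¹)).tendsto 0).comp htail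
    rwa [ENNReal.zero_rpow_of_pos (inv_pos.2 hd)] at this
  have hdiam : ∀ N k (i : ι (k + N)), ediam (t (k + N) i) ≤ tail N ^ d⁻¹ := fun N k i =>
    (ENNReal.le_rpow_inv_iff hd).2 <| (ENNReal.le_tsum i).trans
      (ENNReal.le_tsum (f := fun k => ∑' i, ediam (t (k + N) i) ^ d) k)
  have hcover : ∀ N,
      limsup (fun n => ⋃ i, t n i) atTop ⊆ ⋃ p : Σ k, ι (k + N), t (p.1 + N) p.2 := by
    intro N x hx
    obtain ⟨n, hn, hx⟩ := frequently_atTop.1 (mem_limsup_iff_frequently_mem.1 hx) N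
    obtain ⟨k, rfl⟩ := Nat.exists_eq_add_of_le' hn
    obtain ⟨i, hi⟩ := mem_iUnion.1 hx
    exact mem_iUnion.2 ⟨⟨k, i⟩, hi⟩
  refine le_antisymm ?_ zero_le
  calc μH[d] _ ≤ liminf (fun N => ∑' p : Σ k, ι (k + N), ediam (t (p.1 + N) p.2) ^ d) atTop :=
        hausdorffMeasure_le_liminf_tsum d _ _ hr (fun N (p : Σ k, ι (k + N)) => t (p.1 + N) p.2)
          (Eventually.of_forall fun N p => hdiam N p.1 p.2) (Eventually.of_forall hcover)
    _ = liminf tail atTop := by simp_rw [ENNReal.tsum_sigma']; rfl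
    _ = 0 := htail.liminf_eq

def exceptionalAt {X : Type*} [PseudoMetricSpace X] (f : X → X) (S : Set X) (ε : ℝ) : Set X :=
  {z | ∀ N : ℕ, ∃ n ≥ N, ∃ j, 1 ≤ j ∧ j ≤ n ∧ ∃ c ∈ S,
    dist z (f^[j] c) < Real.exp (-(n : ℝ) * ε)}

theorem exceptionalAt_antitone {X : Type*} [PseudoMetricSpace X] (f : X → X) (S : Set X) :
    Antitone (exceptionalAt f S) := by
  intro ε ε' hεε' z hz N
  obtain ⟨n, hn, j, hj1, hjn, c, hc, hdist⟩ := hz N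
  refine ⟨n, hn, j, hj1, hjn, c, hc, hdist.trans_le (Real.exp_le_exp.2 ?_)⟩
  nlinarith [n.cast_nonneg (α := ℝ)]

theorem tsum_natCast_mul_ofReal_exp_rpow_ne_top {ε d : ℝ} (hε : 0 < ε) (hd : 0 < d) :
    ∑' n : ℕ, (n : ℝ≥0∞) * ENNReal.ofReal (Real.exp (-(n : ℝ) * ε)) ^ d ≠ ∞ := by
  have h : ∀ n : ℕ, (n : ℝ≥0∞) * ENNReal.ofReal (Real.exp (-(n : ℝ) * ε)) ^ d
      = ENNReal.ofReal ((n : ℝ) ^ 1 * Real.exp (-(ε * d) * n)) := by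
    intro n
    rw [ENNReal.ofReal_rpow_of_nonneg (Real.exp_nonneg _) hd.le, ← Real.exp_mul, pow_one,
      ENNReal.ofReal_mul n.cast_nonneg, ENNReal.ofReal_natCast]
    ring_nf
  simp_rw [h]
  rw [← ENNReal.ofReal_tsum_of_nonneg (fun n => by positivity)
    (Real.summable_pow_mul_exp_neg_nat_mul 1 (mul_pos hε hd))]
  exact ENNReal.ofReal_ne_top

section

variable {X : Type*} [MetricSpace X] (f : X → X) (S : Finset X)

theorem exceptionalAt_subset_limsup (ε : ℝ) :
    exceptionalAt f S ε ⊆ limsup (fun n : ℕ => ⋃ i : Finset.Icc 1 n × S,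
      ball (f^[i.1] i.2) (Real.exp (-(n : ℝ) * ε))) atTop := by
  intro z hz
  refine mem_limsup_iff_frequently_mem.2 (frequently_atTop.2 fun N => ?_)
  obtain ⟨n, hn, j, hj1, hjn, c, hc, hdist⟩ := hz N
  exact ⟨n, hn, mem_iUnion.2 ⟨(⟨j, Finset.mem_Icc.2 ⟨hj1, hjn⟩⟩, ⟨c, hc⟩), hdist⟩⟩

theorem hausdorffMeasure_exceptionalAt_eq_zero [MeasurableSpace X] [BorelSpace X] {ε d : ℝ}
    (hε : 0 < ε) (hd : 0 < d) : μH[d] (exceptionalAt f S ε) = 0 := by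
  refine measure_mono_null (exceptionalAt_subset_limsup f S ε)
    (hausdorffMeasure_limsup_iUnion_eq_zero hd _ ?_)
  have hlevel : ∀ n : ℕ, ∑' i : Finset.Icc 1 n × S,
      ediam (ball (f^[i.1] i.2) (Real.exp (-(n : ℝ) * ε))) ^ d
      ≤ (S.card * 2 ^ d) * ((n : ℝ≥0∞) * ENNReal.ofReal (Real.exp (-(n : ℝ) * ε)) ^ d) := by
    intro n
    calc _ ≤ ∑' _ : Finset.Icc 1 n × S, (2 * ENNReal.ofReal (Real.exp (-(n : ℝ) * ε))) ^ d :=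
          ENNReal.tsum_le_tsum fun i =>
            ENNReal.rpow_le_rpow (by rw [← eball_ofReal]; exact ediam_eball_le) hd.le
      _ = _ := by
          rw [tsum_fintype, Finset.sum_const, Finset.card_univ, Fintype.card_prod,
            Fintype.card_coe, Fintype.card_coe, Nat.card_Icc, nsmul_eq_mul,
            ENNReal.mul_rpow_of_nonneg _ _ hd.le]
          push_cast
          ring
  refine ne_top_of_le_ne_top ?_ (ENNReal.tsum_le_tsum hlevel)
  rw [ENNReal.tsum_mul_left]
  exact mul_ne_top (by finiteness) (tsum_natCast_mul_ofReal_exp_rpow_ne_top hε hd)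

theorem dimH_exceptionalAt_eq_zero {ε : ℝ} (hε : 0 < ε) : dimH (exceptionalAt f S ε) = 0 := by
  borelize X
  refine le_antisymm (dimH_le fun d hd_top => ?_) zero_le
  by_contra! hd_pos
  have := hausdorffMeasure_exceptionalAt_eq_zero f S hε (d := d) (by exact_mod_cast hd_pos)
  simp [this] at hd_top

end

/-- for any map `f : ℂ → ℂ` and any finite set `S ⊆ ℂ`, the exceptional set
`E = {z | ∃ ε > 0, for infinitely many n there are 1 ≤ j ≤ n and c ∈ S with
dist(z, f^[j] c) < exp(−n·ε)}` has Hausdorff dimension zero. -/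
theorem dimH_exceptional_eq_zero (f : ℂ → ℂ) (S : Set ℂ) (hS : S.Finite) :
    dimH {z : ℂ | ∃ ε > 0, ∀ N : ℕ, ∃ n ≥ N, ∃ j, 1 ≤ j ∧ j ≤ n ∧ ∃ c ∈ S,
      dist z (f^[j] c) < Real.exp (-(n : ℝ) * ε)} = 0 := by
  lift S to Finset ℂ using hS
  change dimH {z | ∃ ε > 0, z ∈ exceptionalAt f S ε} = 0
  have hsub :
      {z | ∃ ε > 0, z ∈ exceptionalAt f S ε} ⊆ ⋃ k : ℕ, exceptionalAt f S (1 / (k + 1)) := by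
    rintro z ⟨ε, hε, hz⟩
    obtain ⟨k, hk⟩ := exists_nat_one_div_lt hε
    exact mem_iUnion.2 ⟨k, exceptionalAt_antitone f S hk.le hz⟩
  refine le_antisymm ((dimH_mono hsub).trans ?_) zero_le
  rw [dimH_iUnion, iSup_eq_zero.2 fun k => dimH_exceptionalAt_eq_zero f S Nat.one_div_pos_of_nat]
end
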